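/- For density operators ρ, σ on a d-dimensional Hilbert space with σ = I/d and ‖ρ − σ‖₁ ≤ δ ≤ 1, the von Neumann entropy satisfies S(ρ) ≥ log d − δ log d − h(δ), where h is the binary entropy function (Fannes-type continuity bound). -/

import Mathlib

open Matrix MeasureTheory ComplexOrder

/-- Trace norm ‖A‖₁ = tr √(A† A). -/
noncomputable def traceNorm {n : Type*} [Fintype n] [DecidableEq n] (A : Matrix n n ℂ) : ℝ :=
  (((Matrix.posSemidef_conjTranspose_mul_self A).1.eigenvectorUnitary.1 *
      diagonal (((↑) : ℝ → ℂ) ∘ Real.sqrt ∘ (Matrix.posSemidef_conjTranspose_mul_self A).1.eigenvalues) *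
      (star (Matrix.posSemidef_conjTranspose_mul_self A).1.eigenvectorUnitary :
        Matrix n n ℂ)).trace).re

/-- Von Neumann entropy S(ρ) = −∑ λᵢ log λᵢ (eigenvalues of a Hermitian matrix). -/
noncomputable def vNEntropy {n : Type*} [Fintype n] [DecidableEq n] (ρ : Matrix n n ℂ) : ℝ :=
  if h : ρ.IsHermitian then -∑ i, h.eigenvalues i * Real.log (h.eigenvalues i) else 0

/-- A density operator: positive semidefinite with unit trace. -/
def IsDensity {n : Type*} [Fintype n] [DecidableEq n] (ρ : Matrix n n ℂ) : Prop :=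
  ρ.PosSemidef ∧ ρ.trace = 1

/-- Partial trace over the second tensor factor. -/
noncomputable def ptraceB {a b : Type*} [Fintype a] [Fintype b]
    (A : Matrix (a × b) (a × b) ℂ) : Matrix a a ℂ :=
  fun i j => ∑ k, A (i, k) (j, k)

/-- Partial trace over the first tensor factor. -/
noncomputable def ptraceA {a b : Type*} [Fintype a] [Fintype b]
    (A : Matrix (a × b) (a × b) ℂ) : Matrix b b ℂ :=
  fun i j => ∑ k, A (k, i) (k, j)

/-- Outer product |v⟩⟨v|. -/
noncomputable def outer {n : Type*} (v : n → ℂ) : Matrix n n ℂ :=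
  Matrix.vecMulVec v (star v)

noncomputable instance matrixMeasurableSpace {n m : Type*} [Fintype n] [Fintype m] :
    MeasurableSpace (Matrix n m ℂ) := borel _
instance matrixBorelSpace {n m : Type*} [Fintype n] [Fintype m] :
    BorelSpace (Matrix n m ℂ) := ⟨rfl⟩

/-!
For `x ∈ [0, 1]` and `c = 1/d`, concavity of `η(x) = -x log x` gives
`η(x) ≥ η(c) - |x - c| log d`: on `[0, c]` both sides agree at the endpoints, and on `[c, 1]`
the right-hand side at `x = 1` is `(2c - 1) log d ≤ 0 = η(1)`. Summing over the eigenvalues of `ρ`,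
whose `ℓ¹`-distance to the uniform vector is `‖ρ - I/d‖₁` because `ρ` commutes with `I`, yields
`S(ρ) ≥ (1 - δ) log d ≥ (1 - δ) log d - h(δ)`.
-/

open Real Set

lemma concaveOn_negMulLog_add_affine (a b : ℝ) :
    ConcaveOn ℝ (Ici 0) fun x ↦ negMulLog x + (a * x + b) :=
  concaveOn_negMulLog.add ((a • LinearMap.id : ℝ →ₗ[ℝ] ℝ).concaveOn (convex_Ici 0) |>.add_const b)

lemma negMulLog_inv_natCast_sub_abs_mul_log_le (n : ℕ) {x : ℝ} (hx₀ : 0 ≤ x) (hx₁ : x ≤ 1) :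
    negMulLog (n : ℝ)⁻¹ - |x - (n : ℝ)⁻¹| * log n ≤ negMulLog x := by
  set c : ℝ := (n : ℝ)⁻¹
  have hc₀ : 0 ≤ c := by positivity
  have hηc : negMulLog c = c * log n := by simp [c, negMulLog]
  rcases le_total x c with hxc | hcx
  · have := (concaveOn_negMulLog_add_affine (-log n) (c * log n) |>.subset Icc_subset_Ici_self
      (convex_Icc 0 c)).min_le_of_mem_Icc (left_mem_Icc.2 hc₀) (right_mem_Icc.2 hc₀) ⟨hx₀, hxc⟩
    rw [abs_of_nonpos (sub_nonpos.2 hxc)]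
    simp only [negMulLog_zero, hηc] at this
    have := (le_min (le_of_eq (by ring : c * log n = _)) (le_of_eq (by ring))).trans this
    linarith
  · have hc₁ : c ≤ 1 := hcx.trans hx₁
    have hc_log_le : c * log n ≤ (1 - c) * log n := by
      rcases Nat.lt_or_ge n 2 with hn | hn
      · interval_cases n <;> simp [c]
      · have : c ≤ 2⁻¹ := inv_anti₀ two_pos (by exact_mod_cast hn)
        exact mul_le_mul_of_nonneg_right (by linarith) (log_natCast_nonneg n)
    have := (concaveOn_negMulLog_add_affine (log n) (-(c * log n)) |>.subset
      (Icc_subset_Ici_self.trans (Ici_subset_Ici.2 hc₀)) (convex_Icc c 1)).min_le_of_mem_Icc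
      (left_mem_Icc.2 hc₁) (right_mem_Icc.2 hc₁) ⟨hcx, hx₁⟩
    rw [abs_of_nonneg (sub_nonneg.2 hcx)]
    simp only [negMulLog_one, hηc] at this
    have := (le_min (le_of_eq (by ring : c * log n = _)) (by linarith)).trans this
    linarith

lemma one_sub_sum_abs_sub_mul_log_card_le_sum_negMulLog {ι : Type*} [Fintype ι] (p : ι → ℝ)
    (hp : ∀ i, p i ∈ Icc 0 1) :
    (1 - ∑ i, |p i - (Fintype.card ι : ℝ)⁻¹|) * log (Fintype.card ι) ≤
      ∑ i, negMulLog (p i) := by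
  have hunif : ∑ _i : ι, negMulLog (Fintype.card ι : ℝ)⁻¹ = log (Fintype.card ι) := by
    rcases isEmpty_or_nonempty ι with hι | hι
    · simp
    · simp [negMulLog, Finset.card_univ]
  calc (1 - ∑ i, |p i - (Fintype.card ι : ℝ)⁻¹|) * log (Fintype.card ι)
      = ∑ i, (negMulLog (Fintype.card ι : ℝ)⁻¹ -
          |p i - (Fintype.card ι : ℝ)⁻¹| * log (Fintype.card ι)) := by
        rw [Finset.sum_sub_distrib, hunif, ← Finset.sum_mul]
        ring
    _ ≤ ∑ i, negMulLog (p i) := Finset.sum_le_sum fun i _ ↦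
        negMulLog_inv_natCast_sub_abs_mul_log_le _ (hp i).1 (hp i).2

variable {n : Type*} [Fintype n] [DecidableEq n]

lemma traceNorm_eq_re_trace_cfc_sqrt (A : Matrix n n ℂ) :
    traceNorm A = (cfc Real.sqrt (Aᴴ * A)).trace.re := by
  rw [traceNorm, (posSemidef_conjTranspose_mul_self A).1.cfc_eq, IsHermitian.cfc,
    Unitary.conjStarAlgAut_apply]
  rfl

namespace Matrix.IsHermitian

lemma trace_cfc {𝕜 : Type*} [RCLike 𝕜] {A : Matrix n n 𝕜} (hA : A.IsHermitian) (f : ℝ → ℝ) :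
    (cfc f A).trace = ∑ i, (f (hA.eigenvalues i) : 𝕜) := by
  rw [hA.cfc_eq, IsHermitian.cfc, Unitary.conjStarAlgAut_apply, trace_mul_cycle,
    Unitary.coe_star_mul_self, one_mul, trace_diagonal]
  rfl

variable {A : Matrix n n ℂ}

lemma traceNorm_cfc (hA : A.IsHermitian) (f : ℝ → ℝ) :
    traceNorm (cfc f A) = ∑ i, |f (hA.eigenvalues i)| := by
  have hf : ContinuousOn f (spectrum ℝ A) := A.finite_real_spectrum.continuousOn f
  have hsq : (cfc f A)ᴴ * cfc f A = cfc (fun x ↦ f x * f x) A := by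
    rw [← star_eq_conjTranspose, ← cfc_star, cfc_mul _ _ A hf hf]
    simp
  rw [traceNorm_eq_re_trace_cfc_sqrt, hsq,
    ← cfc_comp' Real.sqrt _ A (hf := A.finite_real_spectrum.continuousOn _)]
  simp [Real.sqrt_mul_self_eq_abs, hA.trace_cfc, Complex.re_sum]

lemma sub_smul_one_eq_cfc (hA : A.IsHermitian) (r : ℝ) :
    A - (r : ℂ) • 1 = cfc (fun x ↦ x - r) A := by
  rw [cfc_sub _ _ A, cfc_id' ℝ A, cfc_const r A, Algebra.algebraMap_eq_smul_one]
  rfl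

lemma vNEntropy_eq_sum_negMulLog (hA : A.IsHermitian) :
    vNEntropy A = ∑ i, negMulLog (hA.eigenvalues i) := by
  simp [vNEntropy, hA, negMulLog]

end Matrix.IsHermitian

lemma IsDensity.eigenvalues_mem_Icc {ρ : Matrix n n ℂ} (hρ : IsDensity ρ) (i : n) :
    hρ.1.1.eigenvalues i ∈ Icc 0 1 := by
  have hsum : ∑ j, hρ.1.1.eigenvalues j = 1 := by
    apply RCLike.ofReal_injective (K := ℂ)
    rw [RCLike.ofReal_sum, RCLike.ofReal_one, ← hρ.1.1.trace_eq_sum_eigenvalues, hρ.2]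
  refine ⟨hρ.1.eigenvalues_nonneg i, hsum ▸ ?_⟩
  exact Finset.single_le_sum (fun j _ ↦ hρ.1.eigenvalues_nonneg j) (Finset.mem_univ i)

theorem fannes_bound_near_maximally_mixed_general {d : ℕ}
    (ρ : Matrix (Fin d) (Fin d) ℂ) (hρ : IsDensity ρ)
    (δ : ℝ) (hδ0 : 0 ≤ δ) (hδ1 : δ ≤ 1)
    (h : traceNorm (ρ - (d : ℂ)⁻¹ • (1 : Matrix (Fin d) (Fin d) ℂ)) ≤ δ) :
    Real.log d - δ * Real.log d - Real.binEntropy δ ≤ vNEntropy ρ := by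
  have hH : ρ.IsHermitian := hρ.1.1
  have hdist : ∑ i, |hH.eigenvalues i - (d : ℝ)⁻¹| ≤ δ := by
    rwa [show (d : ℂ)⁻¹ = ((d : ℝ)⁻¹ : ℝ) by push_cast; rfl, hH.sub_smul_one_eq_cfc,
      hH.traceNorm_cfc] at h
  have hbound := one_sub_sum_abs_sub_mul_log_card_le_sum_negMulLog hH.eigenvalues
    hρ.eigenvalues_mem_Icc
  rw [Fintype.card_fin] at hbound
  rw [hH.vNEntropy_eq_sum_negMulLog]
  calc log d - δ * log d - binEntropy δ ≤ (1 - δ) * log d := by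
        linarith [binEntropy_nonneg hδ0 hδ1]
    _ ≤ (1 - ∑ i, |hH.eigenvalues i - (d : ℝ)⁻¹|) * log d :=
        mul_le_mul_of_nonneg_right (by linarith) (log_natCast_nonneg d)
    _ ≤ ∑ i, negMulLog (hH.eigenvalues i) := hbound

/-- Fannes-type bound: if ‖ρ − I/d‖₁ ≤ δ ≤ 1 then
S(ρ) ≥ log d − δ log d − h(δ). -/
theorem fannes_bound_near_maximally_mixed {d : ℕ} (hd : 0 < d)
    (ρ : Matrix (Fin d) (Fin d) ℂ) (hρ : IsDensity ρ)
    (δ : ℝ) (hδ0 : 0 ≤ δ) (hδ1 : δ ≤ 1)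
    (h : traceNorm (ρ - (d : ℂ)⁻¹ • (1 : Matrix (Fin d) (Fin d) ℂ)) ≤ δ) :
    Real.log d - δ * Real.log d - Real.binEntropy δ ≤ vNEntropy ρ :=
  fannes_bound_near_maximally_mixed_general ρ hρ δ hδ0 hδ1 h
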